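/- arXiv:2011.10877 — 4 statements merged into one kernel-verified Lean document; each statement's English description precedes it below -/
import Mathlib

section
/- Let Θ ∈ (0, π/2) and n ∈ ℕ. Let r be feasible for Problem Z5(n,Θ) with E := E5(r) < π/2, and suppose there exist points −2Θ ≤ θ₀ < θ₁ < ⋯ < θ_{2n+1} ≤ 2Θ and σ ∈ {−1, 1} such that Arg(r(e^{iθ_j})/e^{iθ_j/2}) = σ(−1)^j E for j = 0, 1, …, 2n+1. Then any function r̃ feasible for Problem Z5(n,Θ) with E5(r̃) ≤ E agrees with r at every point of the unit circle; in particular r is the unique minimizer of E5. -/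
/-- `Feasible n r` : `r` is a rational function of type `(n,n)` whose denominator has no
zeros on the unit circle, and `|r z| = 1` for all `z` on the unit circle. -/
def Feasible (n : ℕ) (r : ℂ → ℂ) : Prop :=
  (∃ p q : Polynomial ℂ, p.natDegree ≤ n ∧ q.natDegree ≤ n ∧
      (∀ z : ℂ, ‖z‖ = 1 → q.eval z ≠ 0) ∧
      ∀ z : ℂ, r z = p.eval z / q.eval z) ∧
  ∀ z : ℂ, ‖z‖ = 1 → ‖r z‖ = 1

/-- The Z5 error: `sup_{z ∈ S_Θ} |Arg (r z / √z)|`, where `S_Θ = {e^{iθ} : θ ∈ [-2Θ,2Θ]}`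
and `√z` is the principal square root. -/
noncomputable def E5 (Θ : ℝ) (r : ℂ → ℂ) : ℝ :=
  sSup ((fun θ : ℝ =>
      |(r (Complex.exp (θ * Complex.I)) / Complex.exp (θ * Complex.I) ^ ((1 : ℂ)/2)).arg|) ''
    Set.Icc (-(2*Θ)) (2*Θ))

/-- `sign z` for `z` on the unit circle away from the imaginary axis. -/
noncomputable def csign (z : ℂ) : ℂ := if 0 < z.re then 1 else -1

/-- The Z6 error: `sup_{z ∈ T_Θ} |Arg (s z / sign z)|`, where
`T_Θ = {e^{iθ} : θ ∈ [-Θ,Θ] ∪ [π-Θ,π+Θ]}`. -/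
noncomputable def E6 (Θ : ℝ) (s : ℂ → ℂ) : ℝ :=
  sSup ((fun θ : ℝ =>
      |(s (Complex.exp (θ * Complex.I)) / csign (Complex.exp (θ * Complex.I))).arg|) ''
    (Set.Icc (-Θ) Θ ∪ Set.Icc (Real.pi - Θ) (Real.pi + Θ)))

/-!
On the arc write `r (e^{ix}) = e^{ix/2} e^{iα(x)}` and `r' (e^{ix}) = e^{ix/2} e^{iβ(x)}`, where
`r = p / q` and `r' = p' / q'`. Then `D = p q' - p' q` has degree at most `2n` and
`D (e^{ix}) = sin ((α(x) - β(x)) / 2) · w(x)` with `w` continuous and nonvanishing. Since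
`|β| ≤ E`, the real factor `σ sin ((α - β) / 2)` is weakly alternating in sign at the `2n + 2`
equioscillation points of `r`.

A polynomial of degree `< m` whose values on an arc of length `< 2π` are a real function times a
nonvanishing continuous weight, weakly alternating at `m + 1` points, is zero: by the intermediate
value theorem it has a root `e^{iρ}` between the first two points, and since
`e^{ix} - e^{iρ} = sin ((ρ - x) / 2) · (-2i e^{i(x + ρ)/2})`, dividing it out leaves a polynomial of
the same kind with one degree and one alternation point fewer. Hence `p q' = p' q`.
-/

open Complex Polynomial Set

theorem exp_mul_I_sub_exp_mul_I (a b : ℝ) :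
    exp (a * I) - exp (b * I) = 2 * I * exp ((a + b) / 2 * I) * Real.sin ((a - b) / 2) := by
  have ha : (a : ℂ) * I = (a + b) / 2 * I + (a - b) / 2 * I := by ring
  have hb : (b : ℂ) * I = (a + b) / 2 * I - (a - b) / 2 * I := by ring
  rw [ha, hb, exp_add, exp_sub, ofReal_sin, Complex.sin, div_eq_mul_inv (exp _) (exp _), ← exp_neg]
  push_cast
  ring_nf
  rw [I_sq]
  ring

theorem eval_exp_mul_I_X_sub_C_mul (ρ x : ℝ) (D : ℂ[X]) :
    ((X - C (exp (ρ * I))) * D).eval (exp (x * I)) =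
      Real.sin ((ρ - x) / 2) * -(2 * I * exp ((x + ρ) / 2 * I)) * D.eval (exp (x * I)) := by
  rw [eval_mul, eval_sub, eval_X, eval_C, exp_mul_I_sub_exp_mul_I,
    show (x - ρ) / 2 = -((ρ - x) / 2) by ring, Real.sin_neg]
  push_cast
  ring

theorem eqOn_Icc_of_eqOn_diff_singleton {Y : Type*} [TopologicalSpace Y] [T2Space Y]
    {f f' : ℝ → Y} {a b ρ : ℝ} (hab : a < b) (hf : ContinuousOn f (Icc a b))
    (hf' : ContinuousOn f' (Icc a b)) (h : EqOn f f' (Icc a b \ {ρ})) : EqOn f f' (Icc a b) := by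
  refine h.of_subset_closure hf hf' sdiff_subset ?_
  calc Icc a b = closure (Ioo a b) := (closure_Ioo hab.ne).symm
    _ ⊆ closure (Ioo a b ∩ {ρ}ᶜ) :=
      closure_minimal ((dense_compl_singleton ρ).open_subset_closure_inter isOpen_Ioo)
        isClosed_closure
    _ ⊆ closure (Icc a b \ {ρ}) := closure_mono (sdiff_subset_sdiff_left Ioo_subset_Icc_self)

theorem neg_one_pow_mul_nonneg_of_sin_mul {k : ℕ} {ρ x y : ℝ} (hρx : ρ < x)
    (hxρ : x - ρ < 2 * Real.pi) (h : 0 ≤ (-1) ^ (k + 1) * (Real.sin ((ρ - x) / 2) * y)) :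
    0 ≤ (-1) ^ k * y := by
  have hsin : Real.sin ((ρ - x) / 2) < 0 :=
    Real.sin_neg_of_neg_of_neg_pi_lt (by linarith) (by linarith)
  refine nonneg_of_mul_nonneg_right (a := -Real.sin ((ρ - x) / 2)) ?_ (by linarith)
  linear_combination h

theorem nonneg_of_sin_mul_nonneg {ρ x y : ℝ} (hxρ : x < ρ) (hρx : ρ - x < 2 * Real.pi)
    (h : 0 ≤ Real.sin ((ρ - x) / 2) * y) : 0 ≤ y :=
  nonneg_of_mul_nonneg_right h (Real.sin_pos_of_pos_of_lt_pi (by linarith) (by linarith))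

section ArcAlternation

variable {a b : ℝ} {D : ℂ[X]} {g : ℝ → ℝ} {w : ℝ → ℂ}

theorem continuousOn_of_eval_exp_eq_mul (hw : ContinuousOn w (Icc a b))
    (hw0 : ∀ x ∈ Icc a b, w x ≠ 0) (hg : ∀ x ∈ Icc a b, D.eval (exp (x * I)) = g x * w x) :
    ContinuousOn g (Icc a b) := by
  have hre : ContinuousOn (fun x : ℝ => (D.eval (exp (x * I)) / w x).re) (Icc a b) :=
    continuous_re.comp_continuousOn
      ((by fun_prop : Continuous fun x : ℝ => D.eval (exp (x * I))).continuousOn.div hw hw0)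
  refine hre.congr fun x hx => ?_
  dsimp only
  rw [hg x hx, mul_div_cancel_right₀ _ (hw0 x hx), ofReal_re]

theorem exists_eval_exp_eq_zero_of_sign_change (hw : ContinuousOn w (Icc a b))
    (hw0 : ∀ x ∈ Icc a b, w x ≠ 0) (hg : ∀ x ∈ Icc a b, D.eval (exp (x * I)) = g x * w x)
    {s t : ℝ} (has : a ≤ s) (hst : s ≤ t) (htb : t ≤ b) (hs : 0 ≤ g s) (ht : g t ≤ 0) :
    ∃ ρ ∈ Icc s t, D.eval (exp (ρ * I)) = 0 := by
  obtain ⟨ρ, hρ, hgρ⟩ := intermediate_value_Icc' hst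
    ((continuousOn_of_eval_exp_eq_mul hw hw0 hg).mono (Icc_subset_Icc has htb)) ⟨ht, hs⟩
  refine ⟨ρ, hρ, ?_⟩
  rw [hg ρ ⟨has.trans hρ.1, hρ.2.trans htb⟩, hgρ, ofReal_zero, zero_mul]

theorem exists_eval_exp_eq_mul_of_root (hlt : a < b) (hab : b - a < 2 * Real.pi)
    (hw : ContinuousOn w (Icc a b)) (hw0 : ∀ x ∈ Icc a b, w x ≠ 0)
    (hg : ∀ x ∈ Icc a b, D.eval (exp (x * I)) = g x * w x) {ρ : ℝ} (hρ : ρ ∈ Icc a b)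
    {D₁ : ℂ[X]} (hD : D = (X - C (exp (ρ * I))) * D₁) :
    ∃ (g₁ : ℝ → ℝ) (w₁ : ℝ → ℂ), ContinuousOn w₁ (Icc a b) ∧ (∀ x ∈ Icc a b, w₁ x ≠ 0) ∧
      (∀ x ∈ Icc a b, D₁.eval (exp (x * I)) = g₁ x * w₁ x) ∧
      ∀ x ∈ Icc a b, g x = Real.sin ((ρ - x) / 2) * g₁ x := by
  set F : ℝ → ℂ := fun x => -(2 * I * exp ((x + ρ) / 2 * I))
  have hF0 : ∀ x, F x ≠ 0 := fun x => by simp [F, exp_ne_zero]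
  set w₁ : ℝ → ℂ := fun x => w x / F x
  set q : ℝ → ℂ := fun x => D₁.eval (exp (x * I)) / w₁ x
  have hw₁ : ContinuousOn w₁ (Icc a b) :=
    hw.div (by fun_prop : Continuous F).continuousOn fun x _ => hF0 x
  have hw₁0 : ∀ x ∈ Icc a b, w₁ x ≠ 0 := fun x hx => div_ne_zero (hw0 x hx) (hF0 x)
  have hq_real : ∀ x ∈ Icc a b, (q x).im = 0 := by
    have hq : ContinuousOn (fun x => (q x).im) (Icc a b) := continuous_im.comp_continuousOn
      ((by fun_prop : Continuous fun x : ℝ => D₁.eval (exp (x * I))).continuousOn.div hw₁ hw₁0)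
    refine eqOn_Icc_of_eqOn_diff_singleton (ρ := ρ) hlt hq continuousOn_const fun x ⟨hx, hxρ⟩ => ?_
    have hsin : Real.sin ((ρ - x) / 2) ≠ 0 := by
      rw [Ne, Real.sin_eq_zero_iff_of_lt_of_lt (by linarith [hx.2, hρ.1])
        (by linarith [hx.1, hρ.2])]
      exact fun h => hxρ (mem_singleton_iff.mpr (by linarith))
    have hgx := hg x hx
    rw [hD, eval_exp_mul_I_X_sub_C_mul] at hgx
    have : q x = (g x / Real.sin ((ρ - x) / 2) : ℝ) := by
      simp only [q, w₁]
      rw [div_div_eq_mul_div, div_eq_iff (hw0 x hx), ofReal_div, div_mul_eq_mul_div,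
        eq_div_iff (ofReal_ne_zero.mpr hsin)]
      linear_combination hgx
    rw [this, ofReal_im]
  have hD₁ : ∀ x ∈ Icc a b, D₁.eval (exp (x * I)) = (q x).re * w₁ x := fun x hx => by
    rw [← div_mul_cancel₀ (D₁.eval (exp (x * I))) (hw₁0 x hx)]
    congr 1
    exact Complex.ext (ofReal_re _) (by rw [ofReal_im, hq_real x hx])
  refine ⟨fun x => (q x).re, w₁, hw₁, hw₁0, hD₁, fun x hx => ?_⟩
  have hgx := hg x hx
  rw [hD, eval_exp_mul_I_X_sub_C_mul, hD₁ x hx] at hgx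
  have : ((g x : ℝ) : ℂ) = (Real.sin ((ρ - x) / 2) * (q x).re : ℝ) := by
    apply mul_right_cancel₀ (hw0 x hx)
    rw [← hgx, ofReal_mul]
    linear_combination (↑(Real.sin ((ρ - x) / 2)) * ↑(q x).re) * mul_div_cancel₀ (w x) (hF0 x)
  exact_mod_cast this

theorem exists_alternating_nodes_of_root {m : ℕ} (hab : b - a < 2 * Real.pi) {g₁ : ℝ → ℝ}
    {t : Fin (m + 2) → ℝ} (ht : StrictMono t) (htab : ∀ i, t i ∈ Icc a b)
    (halt : ∀ i : Fin (m + 2), 0 ≤ (-1) ^ (i : ℕ) * g (t i)) {ρ : ℝ} (hρ : ρ ∈ Icc (t 0) (t 1))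
    (hgg₁ : ∀ x ∈ Icc a b, g x = Real.sin ((ρ - x) / 2) * g₁ x) :
    ∃ t₁ : Fin (m + 1) → ℝ, StrictMono t₁ ∧ (∀ i, t₁ i ∈ Icc a b) ∧
      ∀ i : Fin (m + 1), 0 ≤ (-1) ^ (i : ℕ) * g₁ (t₁ i) := by
  have hwidth : ∀ i j, t i - t j < 2 * Real.pi := fun i j => by
    linarith [(htab i).2, (htab j).1]
  have right : ∀ i : Fin (m + 1), ρ < t i.succ → 0 ≤ (-1) ^ (i : ℕ) * g₁ (t i.succ) := by
    intro i hi
    have := halt i.succ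
    rw [Fin.val_succ, hgg₁ _ (htab _)] at this
    exact neg_one_pow_mul_nonneg_of_sin_mul hi (by linarith [hwidth i.succ 0, hρ.1]) this
  -- `sin ((ρ - x) / 2)` changes sign only at `ρ`: drop `t 0` if it is the root, else `t 1`
  rcases hρ.1.eq_or_lt with hρ0 | hρ0
  · refine ⟨t ∘ Fin.succ, ht.comp Fin.strictMono_succ, fun i => htab _, fun i => ?_⟩
    exact right i (hρ0 ▸ ht (Fin.succ_pos i))
  · refine ⟨t ∘ (1 : Fin (m + 2)).succAbove, ht.comp (Fin.strictMono_succAbove 1),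
      fun i => htab _, Fin.cases ?_ fun i => ?_⟩
    · have := halt 0
      rw [Fin.val_zero, pow_zero, one_mul, hgg₁ _ (htab 0)] at this
      simpa [Fin.one_succAbove_zero] using
        nonneg_of_sin_mul_nonneg hρ0 (by linarith [hwidth 1 0, hρ.2]) this
    · simpa [Fin.one_succAbove_succ] using
        right i.succ (hρ.2.trans_lt (ht (by simp [Fin.lt_def])))

theorem eq_zero_of_alternating_on_arc (hab : b - a < 2 * Real.pi) {m : ℕ} (hD : D.degree < m)
    (hw : ContinuousOn w (Icc a b)) (hw0 : ∀ x ∈ Icc a b, w x ≠ 0)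
    (hg : ∀ x ∈ Icc a b, D.eval (exp (x * I)) = g x * w x) {t : Fin (m + 1) → ℝ}
    (ht : StrictMono t) (htab : ∀ i, t i ∈ Icc a b)
    (halt : ∀ i : Fin (m + 1), 0 ≤ (-1) ^ (i : ℕ) * g (t i)) : D = 0 := by
  induction m generalizing D g w with
  | zero =>
    rwa [Nat.cast_zero, Nat.WithBot.lt_zero_iff, degree_eq_bot] at hD
  | succ m ih =>
    have h01 : t 0 < t 1 := ht (by simp)
    obtain ⟨ρ, hρ, hDρ⟩ := exists_eval_exp_eq_zero_of_sign_change hw hw0 hg (htab 0).1 h01.le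
      (htab 1).2 (by simpa using halt 0) (by simpa using halt 1)
    have hD₁ := (mul_divByMonic_eq_iff_isRoot.mpr hDρ).symm
    obtain ⟨g₁, w₁, hw₁, hw₁0, hg₁, hgg₁⟩ := exists_eval_exp_eq_mul_of_root
      ((htab 0).1.trans_lt (h01.trans_le (htab 1).2)) hab hw hw0 hg
      ⟨(htab 0).1.trans hρ.1, hρ.2.trans (htab 1).2⟩ hD₁
    obtain ⟨t₁, ht₁, ht₁ab, halt₁⟩ := exists_alternating_nodes_of_root hab ht htab halt hρ hgg₁
    have hdeg : (D /ₘ (X - C (exp (ρ * I)))).degree < m := by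
      rw [hD₁, degree_mul, degree_X_sub_C, Nat.cast_succ, add_comm] at hD
      exact (WithBot.add_lt_add_iff_right WithBot.one_ne_bot).mp hD
    rw [hD₁, ih hdeg hw₁ hw₁0 hg₁ ht₁ ht₁ab halt₁, mul_zero]

end ArcAlternation

theorem Polynomial.degree_mul_sub_mul_lt {R : Type*} [CommRing R] {n : ℕ} {p q p' q' : R[X]}
    (hp : p.natDegree ≤ n) (hq : q.natDegree ≤ n) (hp' : p'.natDegree ≤ n)
    (hq' : q'.natDegree ≤ n) : (p * q' - p' * q).degree < ↑(2 * n + 1) := by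
  have : (p * q' - p' * q).natDegree ≤ 2 * n :=
    (natDegree_sub_le _ _).trans (max_le (natDegree_mul_le.trans (by omega))
      (natDegree_mul_le.trans (by omega)))
  exact (degree_le_of_natDegree_le this).trans_lt (Nat.cast_lt.mpr (by omega))

theorem neg_one_pow_mul_sin_nonneg {σ E b : ℝ} (hσ : σ = 1 ∨ σ = -1) (hE : E ≤ Real.pi)
    (hb : |b| ≤ E) (j : ℕ) : 0 ≤ (-1) ^ j * (σ * Real.sin ((σ * (-1) ^ j * E - b) / 2)) := by
  obtain ⟨hb₁, hb₂⟩ := abs_le.mp hb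
  have key : ∀ s : ℝ, (s = 1 ∨ s = -1) → 0 ≤ s * Real.sin ((s * E - b) / 2) := by
    rintro s (rfl | rfl)
    · simpa using Real.sin_nonneg_of_nonneg_of_le_pi (x := (E - b) / 2) (by linarith) (by linarith)
    · rw [show (-1 * E - b) / 2 = -((E + b) / 2) by ring, Real.sin_neg, neg_one_mul, neg_neg]
      exact Real.sin_nonneg_of_nonneg_of_le_pi (by linarith) (by linarith)
  have hs : σ * (-1) ^ j = 1 ∨ σ * (-1) ^ j = -1 := by
    rcases hσ with rfl | rfl <;> rcases neg_one_pow_eq_or ℝ j with h | h <;> simp [h]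
  calc 0 ≤ σ * (-1) ^ j * Real.sin ((σ * (-1) ^ j * E - b) / 2) := key _ hs
    _ = _ := by ring

theorem exp_mul_I_cpow_one_half {x : ℝ} (hx₁ : -Real.pi < x) (hx₂ : x ≤ Real.pi) :
    exp (x * I) ^ ((1 : ℂ) / 2) = exp (x / 2 * I) := by
  rw [cpow_def_of_ne_zero (exp_ne_zero _), log_exp (by simpa) (by simpa)]
  ring_nf

noncomputable def phaseError (r : ℂ → ℂ) (x : ℝ) : ℝ :=
  (r (exp (x * I)) / exp (x / 2 * I)).arg

section PhaseError

variable {Θ : ℝ} {r : ℂ → ℂ}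

theorem abs_phaseError_le_E5 (hΘ : 2 * Θ < Real.pi) {x : ℝ}
    (hx : x ∈ Icc (-(2 * Θ)) (2 * Θ)) : |phaseError r x| ≤ E5 Θ r := by
  have hbdd : BddAbove ((fun θ : ℝ =>
      |(r (exp (θ * I)) / exp (θ * I) ^ ((1 : ℂ) / 2)).arg|) '' Icc (-(2 * Θ)) (2 * Θ)) :=
    ⟨Real.pi, by rintro _ ⟨y, -, rfl⟩; exact abs_arg_le_pi _⟩
  have := le_csSup hbdd ⟨x, hx, rfl⟩
  dsimp only at this
  rwa [exp_mul_I_cpow_one_half (by linarith [hx.1]) (by linarith [hx.2])] at this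

theorem apply_exp_mul_I_eq (hr : ∀ z : ℂ, ‖z‖ = 1 → ‖r z‖ = 1) (x : ℝ) :
    r (exp (x * I)) = exp (x / 2 * I) * exp (phaseError r x * I) := by
  have hnorm : ‖r (exp (x * I)) / exp (x / 2 * I)‖ = 1 := by
    rw [norm_div, hr _ (norm_exp_ofReal_mul_I x), ← ofReal_ofNat, ← ofReal_div,
      norm_exp_ofReal_mul_I, div_one]
  have h := norm_mul_exp_arg_mul_I (r (exp (x * I)) / exp (x / 2 * I))
  rw [hnorm, ofReal_one, one_mul, eq_div_iff (exp_ne_zero _)] at h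
  rw [phaseError]
  linear_combination -h

theorem continuous_apply_exp_mul_I {p q : ℂ[X]} (hq : ∀ z : ℂ, ‖z‖ = 1 → q.eval z ≠ 0)
    (hpq : ∀ z, r z = p.eval z / q.eval z) : Continuous fun x : ℝ => r (exp (x * I)) := by
  simp only [hpq]
  exact (by fun_prop : Continuous fun x : ℝ => p.eval (exp (x * I))).div (by fun_prop)
    fun x => hq _ (norm_exp_ofReal_mul_I x)

/-- An error below `π` keeps `r (e^{ix}) / e^{ix/2}` off the branch cut of `arg`. -/
theorem continuousOn_phaseError (hΘ : 2 * Θ < Real.pi) (hr : ∀ z : ℂ, ‖z‖ = 1 → ‖r z‖ = 1)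
    (hc : Continuous fun x : ℝ => r (exp (x * I))) (hE : E5 Θ r < Real.pi) :
    ContinuousOn (phaseError r) (Icc (-(2 * Θ)) (2 * Θ)) := by
  intro x hx
  have hslit : r (exp (x * I)) / exp (x / 2 * I) ∈ slitPlane := by
    refine mem_slitPlane_iff_arg.mpr ⟨fun h => ?_, ?_⟩
    · have := abs_phaseError_le_E5 (r := r) hΘ hx
      rw [phaseError, h, abs_of_pos Real.pi_pos] at this
      linarith
    · rw [apply_exp_mul_I_eq hr, mul_div_cancel_left₀ _ (exp_ne_zero _)]
      exact exp_ne_zero _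
  have hf : Continuous fun x : ℝ => r (exp (x * I)) / exp (x / 2 * I) :=
    hc.div (by fun_prop) fun _ => exp_ne_zero _
  exact ContinuousAt.comp_continuousWithinAt (f := fun x : ℝ => r (exp (x * I)) / exp (x / 2 * I))
    (continuousAt_arg hslit) hf.continuousWithinAt

end PhaseError

theorem exists_weight_eval_mul_sub_mul {Θ : ℝ} (hΘ : 2 * Θ < Real.pi) {r r' : ℂ → ℂ}
    {p q p' q' : ℂ[X]} (hr : ∀ z : ℂ, ‖z‖ = 1 → ‖r z‖ = 1) (hr' : ∀ z : ℂ, ‖z‖ = 1 → ‖r' z‖ = 1)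
    (hq : ∀ z : ℂ, ‖z‖ = 1 → q.eval z ≠ 0) (hq' : ∀ z : ℂ, ‖z‖ = 1 → q'.eval z ≠ 0)
    (hpq : ∀ z, r z = p.eval z / q.eval z) (hpq' : ∀ z, r' z = p'.eval z / q'.eval z)
    (hE : E5 Θ r < Real.pi) (hE' : E5 Θ r' < Real.pi) :
    ∃ w : ℝ → ℂ, ContinuousOn w (Icc (-(2 * Θ)) (2 * Θ)) ∧ (∀ x, w x ≠ 0) ∧
      ∀ x : ℝ, (p * q' - p' * q).eval (exp (x * I)) =
        Real.sin ((phaseError r x - phaseError r' x) / 2) * w x := by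
  refine ⟨fun x => 2 * I * q.eval (exp (x * I)) * q'.eval (exp (x * I)) * exp (x / 2 * I) *
    exp ((phaseError r x + phaseError r' x) / 2 * I), ?_, fun x => ?_, fun x => ?_⟩
  · have hα := continuousOn_phaseError hΘ hr (continuous_apply_exp_mul_I hq hpq) hE
    have hβ := continuousOn_phaseError hΘ hr' (continuous_apply_exp_mul_I hq' hpq') hE'
    fun_prop
  · have hx := norm_exp_ofReal_mul_I x
    simp [exp_ne_zero, hq _ hx, hq' _ hx]
  · have hx := norm_exp_ofReal_mul_I x
    have hp := (div_eq_iff (hq _ hx)).mp (hpq _).symm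
    have hp' := (div_eq_iff (hq' _ hx)).mp (hpq' _).symm
    rw [eval_sub, eval_mul, eval_mul, hp, hp', apply_exp_mul_I_eq hr, apply_exp_mul_I_eq hr']
    linear_combination (q.eval (exp (x * I)) * q'.eval (exp (x * I)) * exp (x / 2 * I)) *
      exp_mul_I_sub_exp_mul_I (phaseError r x) (phaseError r' x)

/-- Equioscillation at `2n+2` points implies uniqueness of the Z5 minimizer. -/
theorem stmt_4 (Θ : ℝ) (hΘ : Θ ∈ Set.Ioo 0 (Real.pi/2)) (n : ℕ) (r : ℂ → ℂ)
    (hr : Feasible n r) (hE : E5 Θ r < Real.pi/2)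
    (θ : Fin (2*n+2) → ℝ) (hmono : StrictMono θ)
    (hlo : -(2*Θ) ≤ θ ⟨0, by omega⟩) (hhi : θ ⟨2*n+1, by omega⟩ ≤ 2*Θ)
    (σ : ℝ) (hσ : σ = 1 ∨ σ = -1)
    (hosc : ∀ j : Fin (2*n+2),
      (r (Complex.exp (θ j * Complex.I)) / Complex.exp ((θ j / 2) * Complex.I)).arg
        = σ * (-1)^(j : ℕ) * E5 Θ r) :
    ∀ r' : ℂ → ℂ, Feasible n r' → E5 Θ r' ≤ E5 Θ r →
      ∀ z : ℂ, ‖z‖ = 1 → r' z = r z := by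
  intro r' hr' hle z hz
  obtain ⟨⟨p, q, hp, hq, hq0, hpq⟩, hr1⟩ := hr
  obtain ⟨⟨p', q', hp', hq', hq0', hpq'⟩, hr1'⟩ := hr'
  have h2Θ : 2 * Θ < Real.pi := by linarith [hΘ.2]
  have hEπ : E5 Θ r < Real.pi := by linarith [Real.pi_pos]
  have hθ : ∀ j, θ j ∈ Icc (-(2 * Θ)) (2 * Θ) := fun j =>
    ⟨hlo.trans (hmono.monotone (Nat.zero_le j)),
      (hmono.monotone (Nat.le_of_lt_succ j.isLt)).trans hhi⟩
  obtain ⟨w, hw, hw0, hDw⟩ := exists_weight_eval_mul_sub_mul h2Θ hr1 hr1' hq0 hq0' hpq hpq' hEπ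
    (hle.trans_lt hEπ)
  have hσσ : (σ : ℂ) * σ = 1 := by rcases hσ with rfl | rfl <;> norm_num
  have hD : p * q' - p' * q = 0 := by
    refine eq_zero_of_alternating_on_arc (by linarith) (degree_mul_sub_mul_lt hp hq hp' hq')
      (w := fun x => σ * w x) (g := fun x => σ * Real.sin ((phaseError r x - phaseError r' x) / 2))
      (continuousOn_const.mul hw) (fun x _ => mul_ne_zero (left_ne_zero_of_mul_eq_one hσσ) (hw0 x))
      (fun x _ => ?_) hmono hθ fun j => ?_
    · rw [hDw, ofReal_mul]
      linear_combination (-(Real.sin ((phaseError r x - phaseError r' x) / 2) : ℂ) * w x) * hσσ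
    · rw [show phaseError r (θ j) = _ from hosc j]
      exact neg_one_pow_mul_sin_nonneg hσ hEπ.le ((abs_phaseError_le_E5 h2Θ (hθ j)).trans hle) j
  have hz' := congrArg (eval z) (sub_eq_zero.mp hD)
  rw [eval_mul, eval_mul] at hz'
  rw [hpq' z, hpq z, div_eq_div_iff (hq0' z hz) (hq0 z hz)]
  linear_combination -hz'
end

section
/- For every real x ≥ 0, arccos( ((1 − √x)/(1 + √x))² ) ≤ 2√2 · x^{1/4}. -/
/-!
With `a = √2 · x^{1/4}` we have `√x = a²/2`, and then
`((1 - √x)/(1 + √x))² = 1 - 2 (2a/(2 + a²))²` while `cos 2a = 1 - 2 sin² a`.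
So the claim reduces, for `2a < π`, to `2a/(2 + a²) ≤ sin a`, which follows from
`a - a³/6 ≤ sin a` as long as `a ≤ 2`; for `2a ≥ π` it is `arccos ≤ π`.
-/

open Real

lemma two_mul_div_two_add_sq_le_sin {a : ℝ} (h0 : 0 ≤ a) (h2 : a ≤ 2) :
    2 * a / (2 + a ^ 2) ≤ sin a :=
  calc 2 * a / (2 + a ^ 2) ≤ a - a ^ 3 / 6 := by
        rw [div_le_iff₀ (by positivity)]
        nlinarith [mul_nonneg (pow_nonneg h0 3) (show 0 ≤ 4 - a ^ 2 by nlinarith)]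
    _ ≤ sin a := sin_ge_sub_cube h0

lemma cos_two_mul_le_sq_two_sub_sq_div {a : ℝ} (h0 : 0 ≤ a) (h2 : a ≤ 2) :
    cos (2 * a) ≤ ((2 - a ^ 2) / (2 + a ^ 2)) ^ 2 := by
  have hsq : ((2 - a ^ 2) / (2 + a ^ 2)) ^ 2 = 1 - 2 * (2 * a / (2 + a ^ 2)) ^ 2 := by
    field_simp
    ring
  have hsin : (2 * a / (2 + a ^ 2)) ^ 2 ≤ sin a ^ 2 :=
    pow_le_pow_left₀ (by positivity) (two_mul_div_two_add_sq_le_sin h0 h2) 2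
  rw [hsq, cos_two_mul, cos_sq']
  linarith

lemma arccos_sq_two_sub_sq_div_le {a : ℝ} (h0 : 0 ≤ a) :
    arccos (((2 - a ^ 2) / (2 + a ^ 2)) ^ 2) ≤ 2 * a := by
  rcases le_or_gt π (2 * a) with hpi | hpi
  · exact (arccos_le_pi _).trans hpi
  · calc arccos (((2 - a ^ 2) / (2 + a ^ 2)) ^ 2) ≤ arccos (cos (2 * a)) :=
          arccos_le_arccos (cos_two_mul_le_sq_two_sub_sq_div h0 (by linarith [pi_le_four]))
      _ = 2 * a := arccos_cos (by positivity) hpi.le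

/-- For every real `x ≥ 0`, `arccos(((1-√x)/(1+√x))²) ≤ 2√2 · x^{1/4}`. -/
theorem stmt_6 (x : ℝ) (hx : 0 ≤ x) :
    Real.arccos (((1 - Real.sqrt x) / (1 + Real.sqrt x))^2) ≤
      2 * Real.sqrt 2 * x ^ ((1 : ℝ)/4) := by
  set a := √2 * x ^ ((1 : ℝ) / 4)
  have ha0 : 0 ≤ a := by positivity
  have ha2 : a ^ 2 = 2 * √x := by
    rw [mul_pow, sq_sqrt zero_le_two, ← rpow_natCast, ← rpow_mul hx, sqrt_eq_rpow]
    norm_num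
  have hratio : (1 - √x) / (1 + √x) = (2 - a ^ 2) / (2 + a ^ 2) := by
    rw [ha2, ← mul_one_sub, ← mul_one_add, mul_div_mul_left _ _ two_ne_zero]
  rw [hratio, mul_assoc]
  exact arccos_sq_two_sub_sq_div_le ha0
end

section
/- Let Θ ∈ (0, π/2) and m ∈ ℕ with m ≥ 1. Then the minimal Z6 error E6min(m,Θ) := min_{s feasible for Z6(m,Θ)} E6(s) satisfies 0 < E6min(m,Θ) < π/2. -/
/-! The identity `z ↦ z` is feasible for `m ≥ 1` and has error `Θ < π/2`. A minimiser exists by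
compactness: normalise the coefficient vectors of a minimising sequence to the unit sphere and
extract a convergent subsequence. The limit `p / q` satisfies `|p| = |q|` on the circle, and
cancelling `gcd p q` turns it into a feasible function to which the subsequence converges off the
countably many `θ` with `q (exp (θ * I)) = 0`; as the error of the limit is continuous on each arc,
it is at most the infimum. Finally, error `0` would force `s = 1` on the arc around `1`, hence
`p = q` and `s ≡ 1` on the circle, contradicting `s (-1) = -1`. -/

open Complex Polynomial Filter Topology Set InnerProductGeometry
open scoped Real

namespace Polynomial

theorem dense_setOf_eval_exp_mul_I_ne_zero {p : ℂ[X]} (hp : p ≠ 0) :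
    Dense {θ : ℝ | p.eval (exp (θ * I)) ≠ 0} := by
  have hinj : Function.Injective fun θ : ℝ => (θ : ℂ) * I :=
    (mul_left_injective₀ I_ne_zero).comp ofReal_injective
  have hzero : {θ : ℝ | p.eval (exp (θ * I)) = 0}.Countable :=
    (p.finite_setOfPred_isRoot hp).countable.preimage_cexp.preimage hinj
  simpa [compl_ofPred] using hzero.dense_compl ℝ

theorem eq_zero_of_eval_exp_mul_I_eq_zero {p : ℂ[X]} {U : Set ℝ} (hU : IsOpen U)
    (hne : U.Nonempty) (h : ∀ θ ∈ U, p.eval (exp (θ * I)) = 0) : p = 0 := by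
  by_contra hp
  obtain ⟨θ, hθU, hθ⟩ := (dense_setOf_eval_exp_mul_I_ne_zero hp).inter_open_nonempty U hU hne
  exact hθ (h θ hθU)

theorem norm_eval_eq_of_norm_eval_mul_eq {g p q : ℂ[X]} (hg : g ≠ 0)
    (h : ∀ z : ℂ, ‖z‖ = 1 → ‖(g * p).eval z‖ = ‖(g * q).eval z‖) (z : ℂ) (hz : ‖z‖ = 1) :
    ‖p.eval z‖ = ‖q.eval z‖ := by
  have hexp : Continuous fun θ : ℝ => exp (θ * I) := by fun_prop
  have heq : (fun θ : ℝ => ‖p.eval (exp (θ * I))‖) = fun θ : ℝ => ‖q.eval (exp (θ * I))‖ := by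
    refine Continuous.ext_on (dense_setOf_eval_exp_mul_I_ne_zero hg)
      (p.continuous.comp hexp).norm (q.continuous.comp hexp).norm fun θ hθ => ?_
    have := h _ (norm_exp_ofReal_mul_I θ)
    rwa [eval_mul, eval_mul, norm_mul, norm_mul, mul_right_inj' (norm_ne_zero_iff.2 hθ)] at this
  have hz' : exp (z.arg * I) = z := by simpa [hz] using norm_mul_exp_arg_mul_I z
  simpa [hz'] using congrFun heq z.arg

end Polynomial

theorem le_of_tendsto_of_dense {F : ℕ → ℝ → ℝ} {G : ℝ → ℝ} {c : ℕ → ℝ} {D : Set ℝ}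
    {a b e θ : ℝ} (hab : a < b) (hG : Continuous G) (hD : Dense D)
    (hconv : ∀ x ∈ D, Tendsto (F · x) atTop (𝓝 (G x)))
    (hbound : ∀ j, ∀ x ∈ Icc a b, F j x ≤ c j) (hc : Tendsto c atTop (𝓝 e))
    (hθ : θ ∈ Icc a b) : G θ ≤ e := by
  have hsub : Ioo a b ∩ D ⊆ {x | G x ≤ e} := fun x hx =>
    le_of_tendsto_of_tendsto' (hconv x hx.2) hc fun j => hbound j x (Ioo_subset_Icc_self hx.1)
  have hcl : Icc a b ⊆ closure (Ioo a b ∩ D) := by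
    rw [← closure_Ioo hab.ne]
    exact closure_minimal (hD.open_subset_closure_inter isOpen_Ioo) isClosed_closure
  exact closure_minimal hsub (isClosed_le hG continuous_const) (hcl hθ)

theorem continuousAt_abs_arg_div {w ε : ℂ} (hw : w ≠ 0) (hε : ε ≠ 0) :
    ContinuousAt (fun x => |(x / ε).arg|) w := by
  have hangle : ContinuousAt (fun x => angle x ε) w :=
    (continuousAt_angle (x := (w, ε)) hw hε).comp (f := fun x : ℂ => (x, ε)) (by fun_prop)
  exact hangle.congr <| (eventually_ne_nhds hw).mono fun x hx => angle_eq_abs_arg hx hε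

theorem arg_exp_mul_I_of_mem_Ioc {θ : ℝ} (hθ : θ ∈ Ioc (-π) π) : arg (exp (θ * I)) = θ := by
  rw [arg_exp_mul_I, toIocMod_eq_self]
  simpa [neg_add_eq_sub, two_mul] using hθ

variable {m : ℕ}

noncomputable def ofCoeffs (m : ℕ) : (Fin (m + 1) → ℂ) →ₗ[ℂ] ℂ[X] :=
  (degreeLT ℂ (m + 1)).subtype ∘ₗ (degreeLTEquiv ℂ (m + 1)).symm.toLinearMap

theorem ofCoeffs_injective : Function.Injective (ofCoeffs m) :=
  Subtype.val_injective.comp (degreeLTEquiv ℂ (m + 1)).symm.injective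

theorem natDegree_ofCoeffs_le (c : Fin (m + 1) → ℂ) : (ofCoeffs m c).natDegree ≤ m := by
  have := ((degreeLTEquiv ℂ (m + 1)).symm c).2
  rw [mem_degreeLT] at this
  exact natDegree_le_iff_degree_le.2 (Order.le_of_lt_succ (by exact_mod_cast this))

theorem exists_ofCoeffs_eq {p : ℂ[X]} (hp : p.natDegree ≤ m) : ∃ c, ofCoeffs m c = p := by
  have hmem : p ∈ degreeLT ℂ (m + 1) := mem_degreeLT.2 <|
    (degree_le_of_natDegree_le hp).trans_lt (by exact_mod_cast m.lt_succ_self)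
  exact ⟨degreeLTEquiv ℂ (m + 1) ⟨p, hmem⟩, by simp [ofCoeffs]⟩

theorem continuous_eval_ofCoeffs (z : ℂ) : Continuous fun c => (ofCoeffs m c).eval z :=
  ((leval z).comp (ofCoeffs m)).continuous_of_finiteDimensional

namespace Feasible

variable {s : ℂ → ℂ}

theorem norm_exp_mul_I (hs : Feasible m s) (θ : ℝ) : ‖s (exp (θ * I))‖ = 1 :=
  hs.2 _ (norm_exp_ofReal_mul_I θ)

theorem continuous_comp_exp_mul_I (hs : Feasible m s) :
    Continuous fun θ : ℝ => s (exp (θ * I)) := by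
  obtain ⟨⟨p, q, -, -, hq, hspq⟩, -⟩ := hs
  simp_rw [hspq]
  exact Continuous.div (by fun_prop) (by fun_prop) fun θ => hq _ (norm_exp_ofReal_mul_I θ)

theorem exists_unit_coeffs (hs : Feasible m s) :
    ∃ v : (Fin (m + 1) → ℂ) × (Fin (m + 1) → ℂ), ‖v‖ = 1 ∧
      (∀ z : ℂ, ‖z‖ = 1 → (ofCoeffs m v.2).eval z ≠ 0) ∧
      ∀ z : ℂ, s z = (ofCoeffs m v.1).eval z / (ofCoeffs m v.2).eval z := by
  obtain ⟨⟨p, q, hp, hq, hq0, hspq⟩, -⟩ := hs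
  obtain ⟨c, rfl⟩ := exists_ofCoeffs_eq hp
  obtain ⟨d, rfl⟩ := exists_ofCoeffs_eq hq
  have hw : (c, d) ≠ 0 := by
    intro h
    obtain ⟨-, rfl⟩ := Prod.mk_eq_zero.1 h
    exact hq0 1 (by simp) (by simp)
  have hr : ((‖(c, d)‖ : ℝ) : ℂ)⁻¹ ≠ 0 := inv_ne_zero (ofReal_ne_zero.2 (norm_ne_zero_iff.2 hw))
  refine ⟨((‖(c, d)‖ : ℝ) : ℂ)⁻¹ • (c, d), ?_, fun z hz => ?_, fun z => ?_⟩
  · rw [norm_smul, norm_inv, norm_real, norm_norm, inv_mul_cancel₀ (norm_ne_zero_iff.2 hw)]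
  · simpa only [Prod.smul_snd, map_smul, eval_smul, smul_eq_mul] using mul_ne_zero hr (hq0 z hz)
  · simp only [Prod.smul_fst, Prod.smul_snd, map_smul, eval_smul, smul_eq_mul]
    rw [hspq, mul_div_mul_left _ _ hr]

end Feasible

theorem feasible_one : Feasible m fun _ => 1 :=
  ⟨⟨1, 1, by simp, by simp, by simp, by simp⟩, by simp⟩

theorem feasible_id (hm : 1 ≤ m) : Feasible m fun z => z :=
  ⟨⟨X, 1, by simpa using hm, by simp, by simp, by simp⟩, fun _ hz => hz⟩

theorem exists_feasible_eq_div {p q : ℂ[X]} (hp : p.natDegree ≤ m) (hq : q.natDegree ≤ m)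
    (hq0 : q ≠ 0) (hpq : ∀ z : ℂ, ‖z‖ = 1 → ‖p.eval z‖ = ‖q.eval z‖) :
    ∃ t : ℂ → ℂ, Feasible m t ∧ ∀ z : ℂ, q.eval z ≠ 0 → t z = p.eval z / q.eval z := by
  set g := gcd p q
  have hg : g ≠ 0 := fun h => hq0 ((gcd_eq_zero_iff p q).1 h).2
  have hcop : IsCoprime (p / g) (q / g) := isCoprime_div_gcd_div_gcd hq0
  have hgp : g * (p / g) = p := EuclideanDomain.mul_div_cancel' hg (gcd_dvd_left p q)
  have hgq : g * (q / g) = q := EuclideanDomain.mul_div_cancel' hg (gcd_dvd_right p q)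
  have hnorm : ∀ z : ℂ, ‖z‖ = 1 → ‖(p / g).eval z‖ = ‖(q / g).eval z‖ :=
    norm_eval_eq_of_norm_eval_mul_eq hg (by rwa [hgp, hgq])
  have hden : ∀ z : ℂ, ‖z‖ = 1 → (q / g).eval z ≠ 0 := by
    intro z hz hqz
    have hpz : (p / g).eval z = 0 := by simpa [hqz] using hnorm z hz
    obtain ⟨a, b, hab⟩ := hcop
    simpa [hpz, hqz] using congrArg (eval z) hab
  refine ⟨fun z => (p / g).eval z / (q / g).eval z,
    ⟨⟨p / g, q / g, (natDegree_le_natDegree (degree_div_le p g)).trans hp,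
      (natDegree_le_natDegree (degree_div_le q g)).trans hq, hden, fun _ => rfl⟩,
      fun z hz => by rw [norm_div, hnorm z hz, div_self (norm_ne_zero_iff.2 (hden z hz))]⟩,
    fun z hz => ?_⟩
  have hgz : g.eval z ≠ 0 := by
    rw [← hgq, eval_mul] at hz
    exact left_ne_zero_of_mul hz
  calc (p / g).eval z / (q / g).eval z
      = g.eval z * (p / g).eval z / (g.eval z * (q / g).eval z) :=
        (mul_div_mul_left _ _ hgz).symm
    _ = p.eval z / q.eval z := by rw [← eval_mul, ← eval_mul, hgp, hgq]

theorem exists_feasible_subseq_tendsto {s : ℕ → ℂ → ℂ} (hs : ∀ k, Feasible m (s k)) :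
    ∃ t : ℂ → ℂ, Feasible m t ∧ ∃ φ : ℕ → ℕ, StrictMono φ ∧
      Dense {θ : ℝ | Tendsto (fun j => s (φ j) (exp (θ * I))) atTop (𝓝 (t (exp (θ * I))))} := by
  choose v hv1 hden hrepr using fun k => (hs k).exists_unit_coeffs
  obtain ⟨w, hw, φ, hφ, hlim⟩ :=
    (isCompact_sphere (0 : (Fin (m + 1) → ℂ) × (Fin (m + 1) → ℂ)) 1).tendsto_subseq
      (x := v) fun k => by simpa using hv1 k
  set p := ofCoeffs m w.1
  set q := ofCoeffs m w.2
  have hnum (z : ℂ) : Tendsto (fun j => (ofCoeffs m (v (φ j)).1).eval z) atTop (𝓝 (p.eval z)) :=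
    ((continuous_eval_ofCoeffs z).comp continuous_fst).continuousAt.tendsto.comp hlim
  have hden' (z : ℂ) : Tendsto (fun j => (ofCoeffs m (v (φ j)).2).eval z) atTop (𝓝 (q.eval z)) :=
    ((continuous_eval_ofCoeffs z).comp continuous_snd).continuousAt.tendsto.comp hlim
  have hpq (z : ℂ) (hz : ‖z‖ = 1) : ‖p.eval z‖ = ‖q.eval z‖ := by
    refine tendsto_nhds_unique ((hnum z).norm.congr fun j => ?_) (hden' z).norm
    have := (hs (φ j)).2 z hz
    rwa [hrepr, norm_div, div_eq_one_iff_eq (norm_ne_zero_iff.2 (hden _ z hz))] at this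
  have hq : q ≠ 0 := by
    intro hq
    have hp : p = 0 := eq_zero_of_eval_exp_mul_I_eq_zero isOpen_univ univ_nonempty
      fun θ _ => by simpa [hq] using hpq _ (norm_exp_ofReal_mul_I θ)
    have : w = 0 := Prod.ext (ofCoeffs_injective (by simpa using hp))
      (ofCoeffs_injective (by simpa using hq))
    simp [this] at hw
  obtain ⟨t, ht, htpq⟩ :=
    exists_feasible_eq_div (natDegree_ofCoeffs_le _) (natDegree_ofCoeffs_le _) hq hpq
  refine ⟨t, ht, φ, hφ, (dense_setOf_eval_exp_mul_I_ne_zero hq).mono fun θ hθ => ?_⟩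
  show Tendsto _ atTop _
  simp only [hrepr, htpq _ hθ]
  exact (hnum _).div (hden' _) hθ

theorem csign_exp_mul_I_of_mem_Icc {Θ θ : ℝ} (hΘ : Θ < π / 2) (hθ : θ ∈ Icc (-Θ) Θ) :
    csign (exp (θ * I)) = 1 := by
  have hcos : 0 < Real.cos θ := Real.cos_pos_of_mem_Ioo ⟨by linarith [hθ.1], by linarith [hθ.2]⟩
  rw [csign, exp_ofReal_mul_I_re, if_pos hcos]

theorem csign_exp_mul_I_of_mem_Icc_pi {Θ θ : ℝ} (hΘ : Θ < π / 2)
    (hθ : θ ∈ Icc (π - Θ) (π + Θ)) : csign (exp (θ * I)) = -1 := by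
  have hcos : Real.cos θ < 0 :=
    Real.cos_neg_of_pi_div_two_lt_of_lt (by linarith [hθ.1]) (by linarith [hθ.2])
  rw [csign, exp_ofReal_mul_I_re, if_neg hcos.not_gt]

theorem norm_csign (z : ℂ) : ‖csign z‖ = 1 := by
  unfold csign
  split_ifs <;> simp

theorem csign_ne_zero (z : ℂ) : csign z ≠ 0 :=
  norm_ne_zero_iff.1 (by rw [norm_csign]; exact one_ne_zero)

section E6

variable {Θ : ℝ} {s : ℂ → ℂ}

theorem abs_arg_le_E6 {θ : ℝ} (hθ : θ ∈ Icc (-Θ) Θ ∪ Icc (π - Θ) (π + Θ)) :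
    |(s (exp (θ * I)) / csign (exp (θ * I))).arg| ≤ E6 Θ s :=
  le_csSup ⟨π, by rintro _ ⟨_, _, rfl⟩; exact abs_arg_le_pi _⟩ (mem_image_of_mem _ hθ)

theorem E6_nonneg : 0 ≤ E6 Θ s :=
  Real.sSup_nonneg <| by rintro _ ⟨_, _, rfl⟩; exact abs_nonneg _

theorem E6_le {c : ℝ} (hc : 0 ≤ c)
    (h : ∀ θ ∈ Icc (-Θ) Θ ∪ Icc (π - Θ) (π + Θ),
      |(s (exp (θ * I)) / csign (exp (θ * I))).arg| ≤ c) :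
    E6 Θ s ≤ c :=
  Real.sSup_le (by rintro _ ⟨θ, hθ, rfl⟩; exact h θ hθ) hc

theorem E6_pos (hΘ0 : 0 < Θ) (hΘ : Θ < π / 2) (hs : Feasible m s) : 0 < E6 Θ s := by
  obtain ⟨p, q, -, -, hq, hspq⟩ := hs.1
  by_contra! h0
  have hval {θ : ℝ} (hθ : θ ∈ Icc (-Θ) Θ ∪ Icc (π - Θ) (π + Θ)) :
      s (exp (θ * I)) = csign (exp (θ * I)) := by
    have harg := abs_nonpos_iff.1 ((abs_arg_le_E6 hθ).trans h0)
    have hnorm : ‖s (exp (θ * I)) / csign (exp (θ * I))‖ = 1 := by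
      rw [norm_div, hs.norm_exp_mul_I, norm_csign, div_one]
    exact (div_eq_one_iff_eq (csign_ne_zero _)).1
      (ext_norm_arg (by simpa using hnorm) (by simpa using harg))
  have hpq : p = q := by
    rw [← sub_eq_zero]
    refine eq_zero_of_eval_exp_mul_I_eq_zero isOpen_Ioo (nonempty_Ioo.2 (by linarith : -Θ < Θ))
      fun θ hθ => ?_
    have := hval (Or.inl (Ioo_subset_Icc_self hθ))
    rw [csign_exp_mul_I_of_mem_Icc hΘ (Ioo_subset_Icc_self hθ), hspq,
      div_eq_one_iff_eq (hq _ (norm_exp_ofReal_mul_I θ))] at this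
    rw [eval_sub, this, sub_self]
  have := hval (θ := π) (Or.inr ⟨by linarith, by linarith⟩)
  rw [csign_exp_mul_I_of_mem_Icc_pi hΘ ⟨by linarith, by linarith⟩, hspq, hpq,
    div_self (hq _ (norm_exp_ofReal_mul_I π))] at this
  norm_num at this

theorem E6_id_le (hΘ0 : 0 ≤ Θ) (hΘ : Θ < π / 2) : E6 Θ (fun z => z) ≤ Θ := by
  refine E6_le hΘ0 ?_
  rintro θ (hθ | hθ)
  · rw [csign_exp_mul_I_of_mem_Icc hΘ hθ, div_one,
      arg_exp_mul_I_of_mem_Ioc ⟨by linarith [hθ.1], by linarith [hθ.2]⟩]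
    exact abs_le.2 hθ
  · have hrot : exp (θ * I) / -1 = exp ((θ - π : ℝ) * I) := by
      rw [ofReal_sub, sub_mul, exp_sub, exp_pi_mul_I]
    rw [csign_exp_mul_I_of_mem_Icc_pi hΘ hθ, hrot,
      arg_exp_mul_I_of_mem_Ioc ⟨by linarith [hθ.1], by linarith [hθ.2]⟩]
    exact abs_le.2 ⟨by linarith [hθ.1], by linarith [hθ.2]⟩

end E6

theorem E6_le_of_tendsto {Θ e : ℝ} {s : ℕ → ℂ → ℂ} {t : ℂ → ℂ} (hΘ0 : 0 < Θ) (hΘ : Θ < π / 2)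
    (ht : Feasible m t)
    (hD : Dense {θ : ℝ | Tendsto (fun j => s j (exp (θ * I))) atTop (𝓝 (t (exp (θ * I))))})
    (he : Tendsto (fun j => E6 Θ (s j)) atTop (𝓝 e)) : E6 Θ t ≤ e := by
  have hcont {ε : ℂ} (hε : ε ≠ 0) (θ : ℝ) :
      ContinuousAt (fun x => |(x / ε).arg|) (t (exp (θ * I))) :=
    continuousAt_abs_arg_div (norm_ne_zero_iff.1 (by rw [ht.norm_exp_mul_I]; exact one_ne_zero)) hε
  have harc {a b : ℝ} {ε : ℂ} (hab : a < b) (hε : ε ≠ 0)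
      (hsign : ∀ θ ∈ Icc a b, θ ∈ Icc (-Θ) Θ ∪ Icc (π - Θ) (π + Θ) ∧ csign (exp (θ * I)) = ε)
      (θ : ℝ) (hθ : θ ∈ Icc a b) : |(t (exp (θ * I)) / csign (exp (θ * I))).arg| ≤ e := by
    rw [(hsign θ hθ).2]
    refine le_of_tendsto_of_dense (F := fun j θ => |(s j (exp (θ * I)) / ε).arg|)
      (G := fun θ => |(t (exp (θ * I)) / ε).arg|) hab
      (continuous_iff_continuousAt.2 fun θ => (hcont hε θ).comp
        (f := fun θ : ℝ => t (exp (θ * I))) ht.continuous_comp_exp_mul_I.continuousAt)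
      hD (fun θ hθ => (hcont hε θ).tendsto.comp hθ) (fun j θ hθ => ?_) he hθ
    rw [← (hsign θ hθ).2]
    exact abs_arg_le_E6 (hsign θ hθ).1
  refine E6_le (ge_of_tendsto' he fun _ => E6_nonneg) ?_
  rintro θ (hθ | hθ)
  · exact harc (by linarith) one_ne_zero
      (fun θ hθ => ⟨Or.inl hθ, csign_exp_mul_I_of_mem_Icc hΘ hθ⟩) θ hθ
  · exact harc (by linarith) (neg_ne_zero.2 one_ne_zero)
      (fun θ hθ => ⟨Or.inr hθ, csign_exp_mul_I_of_mem_Icc_pi hΘ hθ⟩) θ hθ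

theorem exists_isLeast_E6 {Θ : ℝ} (hΘ0 : 0 < Θ) (hΘ : Θ < π / 2) (m : ℕ) :
    ∃ e : ℝ, IsLeast {x : ℝ | ∃ s : ℂ → ℂ, Feasible m s ∧ x = E6 Θ s} e := by
  set S := {x : ℝ | ∃ s : ℂ → ℂ, Feasible m s ∧ x = E6 Θ s}
  have hbdd : BddBelow S := ⟨0, by rintro _ ⟨s, -, rfl⟩; exact E6_nonneg⟩
  obtain ⟨u, -, hu, huS⟩ := exists_seq_tendsto_sInf (S := S) ⟨_, _, feasible_one, rfl⟩ hbdd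
  choose s hs hsu using huS
  obtain ⟨t, ht, φ, hφ, hD⟩ := exists_feasible_subseq_tendsto hs
  have hle : E6 Θ t ≤ sInf S := E6_le_of_tendsto hΘ0 hΘ ht hD <| by
    simpa only [Function.comp_def, hsu] using hu.comp hφ.tendsto_atTop
  exact ⟨sInf S, ⟨t, ht, le_antisymm (csInf_le hbdd ⟨t, ht, rfl⟩) hle⟩,
    fun x hx => csInf_le hbdd hx⟩

/-- The minimal Z6 error lies strictly between `0` and `π/2`. -/
theorem stmt_9 (Θ : ℝ) (hΘ : Θ ∈ Set.Ioo 0 (Real.pi/2)) (m : ℕ) (hm : 1 ≤ m) :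
    ∃ e : ℝ, IsLeast {x : ℝ | ∃ s : ℂ → ℂ, Feasible m s ∧ x = E6 Θ s} e ∧
      0 < e ∧ e < Real.pi/2 := by
  obtain ⟨hΘ0, hΘ⟩ := hΘ
  obtain ⟨e, he⟩ := exists_isLeast_E6 hΘ0 hΘ m
  obtain ⟨s, hs, rfl⟩ := he.1
  refine ⟨_, he, E6_pos hΘ0 hΘ hs, ?_⟩
  calc E6 Θ s ≤ E6 Θ (fun z => z) := he.2 ⟨_, feasible_id hm, rfl⟩
    _ ≤ Θ := E6_id_le hΘ0.le hΘ
    _ < π / 2 := hΘ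
end

section
/- Let n ∈ ℕ and w ∈ ℂ. Then (1 + w)^{2n+1} = (1 − w)^{2n+1} if and only if there exists an integer j with |j| ≤ n such that w = i·tan(jπ/(2n+1)). -/
/-!
The Cayley transform `w ↦ (1 + w) / (1 - w)` turns the equation into `z ^ (2n+1) = 1`, with
inverse `z ↦ (z - 1) / (z + 1)`. The roots of unity are `z = exp (2iθ)` with `θ = jπ/(2n+1)`,
`|j| ≤ n`, none of which is `-1`, and `(exp (2iθ) - 1) / (exp (2iθ) + 1) = i tan θ`.
-/

open Complex
open scoped Real

theorem one_add_pow_eq_one_sub_pow_iff {K : Type*} [Field K] [NeZero (2 : K)] {N : ℕ}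
    (hN : N ≠ 0) (w : K) :
    (1 + w) ^ N = (1 - w) ^ N ↔
      ∃ z : K, z ^ N = 1 ∧ z + 1 ≠ 0 ∧ w = (z - 1) / (z + 1) := by
  have h2 : (2 : K) ≠ 0 := two_ne_zero
  constructor
  · intro h
    have hw : 1 - w ≠ 0 := by
      intro hw
      rw [hw, zero_pow hN, pow_eq_zero_iff hN] at h
      exact h2 (by linear_combination h + hw)
    have hz : (1 + w) / (1 - w) + 1 ≠ 0 := by
      rw [div_add_one hw]
      exact div_ne_zero (by ring_nf; exact h2) hw
    refine ⟨(1 + w) / (1 - w), by rw [div_pow, h, div_self (pow_ne_zero N hw)], hz, ?_⟩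
    rw [eq_div_iff hz]
    field_simp
    ring
  · rintro ⟨z, hz, hz1, rfl⟩
    have e1 : 1 + (z - 1) / (z + 1) = z * (2 / (z + 1)) := by field_simp; ring
    have e2 : 1 - (z - 1) / (z + 1) = 2 / (z + 1) := by field_simp; ring
    rw [e1, e2, mul_pow, hz, one_mul]

theorem Int.exists_abs_le_dvd_sub (n : ℕ) (k : ℤ) :
    ∃ j : ℤ, |j| ≤ n ∧ ((2 * n + 1 : ℕ) : ℤ) ∣ k - j := by
  refine ⟨k.bmod (2 * n + 1), abs_le.2 ⟨?_, ?_⟩, Int.dvd_self_sub_bmod⟩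
  · have := Int.le_bmod (x := k) (m := 2 * n + 1) (by omega)
    omega
  · have := Int.bmod_le (x := k) (m := 2 * n + 1) (by omega)
    omega

namespace Complex

theorem exp_two_mul_mul_I (θ : ℂ) : exp (2 * θ * I) = (cos θ + sin θ * I) ^ 2 := by
  rw [← exp_mul_I, ← exp_nat_mul]
  ring_nf

theorem exp_two_mul_mul_I_add_one (θ : ℂ) :
    exp (2 * θ * I) + 1 = 2 * cos θ * exp (θ * I) := by
  rw [exp_two_mul_mul_I, exp_mul_I]
  linear_combination sin θ ^ 2 * I_sq - sin_sq_add_cos_sq θ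

theorem exp_two_mul_mul_I_sub_one (θ : ℂ) :
    exp (2 * θ * I) - 1 = 2 * I * sin θ * exp (θ * I) := by
  rw [exp_two_mul_mul_I, exp_mul_I]
  linear_combination -sin θ ^ 2 * I_sq + sin_sq_add_cos_sq θ

theorem exp_two_mul_mul_I_sub_one_div_add_one {θ : ℂ} (h : cos θ ≠ 0) :
    (exp (2 * θ * I) - 1) / (exp (2 * θ * I) + 1) = I * tan θ := by
  rw [exp_two_mul_mul_I_add_one, exp_two_mul_mul_I_sub_one, tan_eq_sin_div_cos]
  field_simp [exp_ne_zero]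

theorem exp_two_mul_mul_I_add_one_ne_zero {θ : ℂ} (h : cos θ ≠ 0) :
    exp (2 * θ * I) + 1 ≠ 0 := by
  rw [exp_two_mul_mul_I_add_one]
  exact mul_ne_zero (mul_ne_zero two_ne_zero h) (exp_ne_zero _)

theorem pow_two_mul_add_one_eq_one_iff (n : ℕ) (z : ℂ) :
    z ^ (2 * n + 1) = 1 ↔
      ∃ j : ℤ, |j| ≤ n ∧ z = exp (2 * ((j * π / (2 * n + 1) : ℝ) : ℂ) * I) := by
  have hN : ((2 * n + 1 : ℕ) : ℂ) ≠ 0 := Nat.cast_ne_zero.2 (Nat.succ_ne_zero _)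
  constructor
  · intro hz
    have : NeZero (2 * n + 1) := ⟨Nat.succ_ne_zero _⟩
    obtain ⟨k, -, rfl⟩ := (isPrimitiveRoot_exp _ (Nat.succ_ne_zero _)).eq_pow_of_pow_eq_one hz
    obtain ⟨j, hj, m, hm⟩ := Int.exists_abs_le_dvd_sub n k
    refine ⟨j, hj, ?_⟩
    rw [← exp_nat_mul, exp_eq_exp_iff_exists_int]
    refine ⟨m, ?_⟩
    have hk : (k : ℂ) = j + (2 * n + 1 : ℕ) * m := by exact_mod_cast (sub_eq_iff_eq_add'.1 hm)
    rw [hk]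
    push_cast at hN ⊢
    field_simp
  · rintro ⟨j, -, rfl⟩
    rw [← exp_nat_mul, exp_eq_one_iff]
    refine ⟨j, ?_⟩
    push_cast at hN ⊢
    field_simp

end Complex

theorem Real.cos_int_mul_pi_div_ne_zero {n : ℕ} {j : ℤ} (hj : |j| ≤ n) :
    Real.cos (j * π / (2 * n + 1)) ≠ 0 := by
  have hj' : |(j : ℝ)| ≤ n := by exact_mod_cast hj
  have hlt : |j * π / (2 * n + 1)| < π / 2 := by
    rw [abs_div, abs_mul, abs_of_pos Real.pi_pos,
      abs_of_pos (by positivity : (0 : ℝ) < 2 * n + 1), div_lt_div_iff₀ (by positivity) two_pos]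
    nlinarith [Real.pi_pos, mul_le_mul_of_nonneg_right hj' Real.pi_pos.le]
  exact (Real.cos_pos_of_mem_Ioo (abs_lt.1 hlt)).ne'

/-- For `n ∈ ℕ` and `w ∈ ℂ`, `(1+w)^{2n+1} = (1-w)^{2n+1}` iff `w = i·tan(jπ/(2n+1))`
for some integer `j` with `|j| ≤ n`. -/
theorem stmt_14 (n : ℕ) (w : ℂ) :
    (1 + w)^(2*n+1) = (1 - w)^(2*n+1) ↔
      ∃ j : ℤ, |j| ≤ (n : ℤ) ∧
        w = Complex.I * Real.tan ((j : ℝ) * Real.pi / (2 * (n : ℝ) + 1)) := by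
  rw [one_add_pow_eq_one_sub_pow_iff (Nat.succ_ne_zero _)]
  constructor
  · rintro ⟨z, hz, -, rfl⟩
    obtain ⟨j, hj, rfl⟩ := (pow_two_mul_add_one_eq_one_iff n z).1 hz
    refine ⟨j, hj, ?_⟩
    rw [exp_two_mul_mul_I_sub_one_div_add_one, Complex.ofReal_tan]
    exact_mod_cast Real.cos_int_mul_pi_div_ne_zero hj
  · rintro ⟨j, hj, rfl⟩
    have hcos : Complex.cos ((j * Real.pi / (2 * n + 1) : ℝ) : ℂ) ≠ 0 := by
      exact_mod_cast Real.cos_int_mul_pi_div_ne_zero hj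
    refine ⟨_, (pow_two_mul_add_one_eq_one_iff n _).2 ⟨j, hj, rfl⟩,
      exp_two_mul_mul_I_add_one_ne_zero hcos, ?_⟩
    rw [exp_two_mul_mul_I_sub_one_div_add_one hcos, Complex.ofReal_tan]
end
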